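/- Proposition 1 (correctness of the efficient instantiation algorithm). Let expr_G be a symbolic multidimensional expression satisfying the assumptions of Lemmas 1 and 2: every path from a leaf node to the root passes through at least one sum operator, and for every leaf node the union of the global index placeholder tuples G_j over all sum operators j on its path to the root equals G. Then, given the same set data S*, the constraint matrices output by the exhaustive instantiation algorithm (Algorithm 1) and by the context-passing instantiation algorithm (Algorithm 2) are identical: for every global index tuple G* ∈ space(G) and every variable v, the coefficient of v in row G* produced by Algorithm 2 (after aggregating tagged terms with equal tags) equals the coefficient of v in the expression expr_{G*} produced by Algorithm 1. -/

import Mathlib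

/-- A symbolic multidimensional expression tree.  Leaf nodes are *terms*, consisting of
a rational coefficient and a variable whose indices are determined (as functions) by the
values of the index placeholders recorded in a context `ℕ → Option V`.  Non-leaf nodes are
binary add/subtract operators and unary sum operators; a sum operator carries its logical
condition `(Gk ‖ Lk) ∈ data`, where `Gk` is the tuple of global index placeholders,
`Lk` the tuple of local index placeholders, and `data` the instantiating finite set of
index tuples. -/
inductive GExpr (V Var : Type) : Type where
  | term (coef : (ℕ → Option V) → ℚ) (var : (ℕ → Option V) → Var) : GExpr V Var
  | add (l r : GExpr V Var) : GExpr V Var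
  | sub (l r : GExpr V Var) : GExpr V Var
  | sum (Gk Lk : List ℕ) (data : Finset (List V)) (body : GExpr V Var) : GExpr V Var

variable {V Var : Type}

/-- Extend a context by binding the placeholder names `names` to the values `vals`
(componentwise). -/
def bindCtx (ctx : ℕ → Option V) (names : List ℕ) (vals : List V) : ℕ → Option V :=
  fun p => match (names.zip vals).find? (fun q => q.1 == p) with
    | some q => some q.2
    | none => ctx p

/-- `agreesB ctx names vals` holds iff the value tuple `vals` agrees with the context `ctx`
on every placeholder of `names` that is already bound in `ctx`. -/
def agreesB [DecidableEq V] (ctx : ℕ → Option V) (names : List ℕ) (vals : List V) : Bool :=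
  (names.zip vals).all (fun q => match ctx q.1 with
    | some a => decide (q.2 = a)
    | none => true)

/-- Algorithm 1 (exhaustive instantiation), evaluation of one row: given a context that binds
all global index placeholders to a concrete tuple `G*`, evaluate the expression tree to the
linear expression `expr_{G*}`, represented as the function assigning to each variable its
coefficient.  A sum operator is evaluated as the sum of its operand over all tuples of its
set data whose `Gk`-components equal the corresponding components of `G*`, with the
`Lk`-components bound as the values of the local index placeholders. -/
def evalFull [DecidableEq V] [DecidableEq Var] :
    GExpr V Var → (ℕ → Option V) → Var → ℚ
  | .term c v, ctx => fun w => if w = v ctx then c ctx else 0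
  | .add l r, ctx => fun w => evalFull l ctx w + evalFull r ctx w
  | .sub l r, ctx => fun w => evalFull l ctx w - evalFull r ctx w
  | .sum Gk Lk data body, ctx => fun w =>
      ∑ tup ∈ data.filter (fun tup => agreesB ctx Gk (tup.take Gk.length) = true),
        evalFull body (bindCtx ctx (Gk ++ Lk) tup) w

/-- Algorithm 2 (context-passing instantiation), with aggregation of tagged terms built in:
starting from a (partial) context, traverse the tree once; at a sum operator iterate over
those tuples of the set data that agree with the context on the already-bound placeholders
of `Gk`, extending the context by the bindings `Gk := Gk*`, `Lk := Lk*`; at a subtract node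
negate the right operand's terms; at a leaf emit the term tagged with the context's values
of all global placeholders `Glist`.  `evalTagged Glist e ctx tag w` is the aggregated
coefficient of variable `w` in the constraint row indexed by `tag`. -/
def evalTagged [DecidableEq V] [DecidableEq Var] (Glist : List ℕ) :
    GExpr V Var → (ℕ → Option V) → List (Option V) → Var → ℚ
  | .term c v, ctx => fun tag w => if tag = Glist.map ctx ∧ w = v ctx then c ctx else 0
  | .add l r, ctx => fun tag w => evalTagged Glist l ctx tag w + evalTagged Glist r ctx tag w
  | .sub l r, ctx => fun tag w => evalTagged Glist l ctx tag w - evalTagged Glist r ctx tag w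
  | .sum Gk Lk data body, ctx => fun tag w =>
      ∑ tup ∈ data.filter (fun tup => agreesB ctx Gk (tup.take Gk.length) = true),
        evalTagged Glist body (bindCtx ctx (Gk ++ Lk) tup) tag w

/-- `spaceTuples sp names` is `space(G)` for the tuple `names` of placeholders: the finite
set of tuples whose `j`-th component ranges over the admissible values `sp (names j)`. -/
def spaceTuples [DecidableEq V] (sp : ℕ → Finset V) : List ℕ → Finset (List V)
  | [] => {[]}
  | g :: gs => ((sp g) ×ˢ spaceTuples sp gs).image (fun p => p.1 :: p.2)

/-- The full context binding the global placeholders `Glist` to the concrete tuple `Gstar`. -/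
def fullCtx (Glist : List ℕ) (Gstar : List V) : ℕ → Option V :=
  bindCtx (fun _ => none) Glist Gstar

/-- One-hole contexts for expression trees, used to designate the position of a node. -/
inductive GCtx (V Var : Type) : Type where
  | hole : GCtx V Var
  | addL (c : GCtx V Var) (r : GExpr V Var) : GCtx V Var
  | addR (l : GExpr V Var) (c : GCtx V Var) : GCtx V Var
  | subL (c : GCtx V Var) (r : GExpr V Var) : GCtx V Var
  | subR (l : GExpr V Var) (c : GCtx V Var) : GCtx V Var
  | sumC (Gk Lk : List ℕ) (data : Finset (List V)) (c : GCtx V Var) : GCtx V Var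

/-- Plug an expression into the hole of a one-hole context. -/
def GCtx.plug : GCtx V Var → GExpr V Var → GExpr V Var
  | .hole, e => e
  | .addL c r, e => .add (c.plug e) r
  | .addR l c, e => .add l (c.plug e)
  | .subL c r, e => .sub (c.plug e) r
  | .subR l c, e => .sub l (c.plug e)
  | .sumC Gk Lk d c, e => .sum Gk Lk d (c.plug e)

/-- The path from the hole to the root contains no sum operator. -/
def GCtx.noSum : GCtx V Var → Prop
  | .hole => True
  | .addL c _ => c.noSum
  | .addR _ c => c.noSum
  | .subL c _ => c.noSum
  | .subR _ c => c.noSum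
  | .sumC _ _ _ _ => False

/-- The global index placeholder tuples `Gk` of the sum operators on the path from the
hole to the root. -/
def GCtx.spineGks : GCtx V Var → List (List ℕ)
  | .hole => []
  | .addL c _ => c.spineGks
  | .addR _ c => c.spineGks
  | .subL c _ => c.spineGks
  | .subR _ c => c.spineGks
  | .sumC Gk _ _ c => Gk :: c.spineGks

/-- Every path from a leaf node to the root passes through at least one sum operator
(the assumption justified by Lemma 1). -/
def GExpr.allUnderSum : GExpr V Var → Prop
  | .term _ _ => False
  | .add l r => l.allUnderSum ∧ r.allUnderSum
  | .sub l r => l.allUnderSum ∧ r.allUnderSum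
  | .sum _ _ _ _ => True

/-- Well-formedness of a symbolic expression w.r.t. the global placeholder tuple `Glist`:
at every sum operator, `Gk` is a tuple of placeholders from `Glist`, the local placeholders
`Lk` are disjoint from the globals, both tuples consist of distinct placeholders, and every
tuple of the set data has length `|Gk| + |Lk|`. -/
def GExpr.wf (Glist : List ℕ) : GExpr V Var → Prop
  | .term _ _ => True
  | .add l r => l.wf Glist ∧ r.wf Glist
  | .sub l r => l.wf Glist ∧ r.wf Glist
  | .sum Gk Lk data body =>
      (∀ g ∈ Gk, g ∈ Glist) ∧ (∀ l ∈ Lk, l ∉ Glist) ∧ Gk.Nodup ∧ Lk.Nodup ∧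
      (∀ tup ∈ data, tup.length = Gk.length + Lk.length) ∧ body.wf Glist

/-- For every leaf node, the union of the global placeholder tuples `Gk` of the sum
operators on its path to the root covers all of `Glist` (the assumption justified by
Lemma 2); `acc` accumulates the globals bound so far. -/
def GExpr.covers (Glist : List ℕ) : GExpr V Var → List ℕ → Prop
  | .term _ _, acc => ∀ g ∈ Glist, g ∈ acc
  | .add l r, acc => l.covers Glist acc ∧ r.covers Glist acc
  | .sub l r, acc => l.covers Glist acc ∧ r.covers Glist acc
  | .sum Gk _ _ body, acc => body.covers Glist (acc ++ Gk)

/-- Lemma 2's data expansion: replace every tuple of `data` by all its expansions inserting,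
after the first `nG` (global) components, one value from `vals`. -/
def expandData [DecidableEq V] (data : Finset (List V)) (nG : ℕ) (vals : Finset V) :
    Finset (List V) :=
  (data ×ˢ vals).image (fun p => p.1.take nG ++ p.2 :: p.1.drop nG)

/-- Proposition 2's data restriction w.r.t. the global placeholder `gk` and the admissible
subset `P`: every set data whose index tuples contain the placeholder `gk` is replaced by
its subset of tuples whose `gk`-component lies in `P`. -/
def GExpr.restrict [DecidableEq V] (gk : ℕ) (P : Finset V) : GExpr V Var → GExpr V Var
  | .term c v => .term c v
  | .add l r => .add (l.restrict gk P) (r.restrict gk P)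
  | .sub l r => .sub (l.restrict gk P) (r.restrict gk P)
  | .sum Gk Lk data body =>
      if gk ∈ Gk ++ Lk then
        .sum Gk Lk
          (data.filter (fun tup => ((tup[(Gk ++ Lk).idxOf gk]?).any fun a => decide (a ∈ P)) = true))
          (body.restrict gk P)
      else .sum Gk Lk data (body.restrict gk P)

/-!
Follow Algorithm 2 towards the row `G*`. Overwriting the global placeholders of its partial
context `ctx` by `G*` gives exactly the context Algorithm 1 uses at the same node. While `ctx`
binds globals only to their values in `G*`, a sum operator of Algorithm 1 ranges over the tuples
of Algorithm 2 that bind no global to a value other than the one in `G*`; under any other tuple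
`ctx` contradicts `G*` for good, so Algorithm 2 emits no term tagged `G*` below it. At a leaf the
covering assumption makes `ctx` bind every global, so the two contexts coincide there.
-/

section Binding

variable {ctx ctx' : ℕ → Option V} {names : List ℕ} {vals : List V} {p : ℕ} {a : V}

lemma bindCtx_cons (n : ℕ) (v : V) (ns : List ℕ) (vs : List V) :
    bindCtx ctx (n :: ns) (v :: vs) p = if p = n then some v else bindCtx ctx ns vs p := by
  by_cases h : p = n
  · subst h; simp [bindCtx]
  · simp [bindCtx, h, List.find?_cons_of_neg, Ne.symm h]

lemma bindCtx_of_not_mem (hp : p ∉ names) : bindCtx ctx names vals p = ctx p := by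
  induction names generalizing vals with
  | nil => simp [bindCtx]
  | cons n ns ih =>
    cases vals with
    | nil => simp [bindCtx]
    | cons v vs =>
      rw [List.mem_cons, not_or] at hp
      rw [bindCtx_cons, if_neg hp.1, ih hp.2]

lemma bindCtx_of_mem_zip (hnd : names.Nodup) (h : (p, a) ∈ names.zip vals) :
    bindCtx ctx names vals p = some a := by
  induction names generalizing vals with
  | nil => simp at h
  | cons n ns ih =>
    cases vals with
    | nil => simp at h
    | cons v vs =>
      rw [List.nodup_cons] at hnd
      rw [bindCtx_cons]
      rcases List.mem_cons.1 h with h | h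
      · simp_all
      · have hpn : p ≠ n := fun hpn => hnd.1 (hpn ▸ (List.of_mem_zip h).1)
        rw [if_neg hpn, ih hnd.2 h]

lemma bindCtx_apply_congr (h : ctx p = ctx' p) :
    bindCtx ctx names vals p = bindCtx ctx' names vals p := by
  unfold bindCtx; split <;> simp [h]

lemma exists_mem_zip_of_mem (hlen : names.length ≤ vals.length) (hp : p ∈ names) :
    ∃ a, (p, a) ∈ names.zip vals := by
  rw [← List.map_fst_zip hlen] at hp
  obtain ⟨⟨q, a⟩, hq, rfl⟩ := List.mem_map.1 hp
  exact ⟨a, hq⟩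

lemma isSome_bindCtx_of_mem (hnd : names.Nodup) (hlen : names.length ≤ vals.length)
    (hp : p ∈ names) : (bindCtx ctx names vals p).isSome := by
  obtain ⟨a, ha⟩ := exists_mem_zip_of_mem hlen hp
  simp [bindCtx_of_mem_zip hnd ha]

lemma map_bindCtx (hnd : names.Nodup) (hlen : vals.length = names.length) :
    names.map (bindCtx ctx names vals) = vals.map some := by
  calc names.map (bindCtx ctx names vals)
      = (names.zip vals).map (bindCtx ctx names vals ∘ Prod.fst) := by
        rw [← List.map_map, List.map_fst_zip hlen.ge]
    _ = (names.zip vals).map (some ∘ Prod.snd) := ?_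
    _ = vals.map some := by rw [← List.map_map, List.map_snd_zip hlen.le]
  exact List.map_congr_left fun ⟨p, a⟩ h => bindCtx_of_mem_zip hnd h

lemma agreesB_eq_true_iff [DecidableEq V] :
    agreesB ctx names vals = true ↔
      ∀ p a, (p, a) ∈ names.zip vals → ∀ b, ctx p = some b → a = b := by
  simp only [agreesB, List.all_eq_true, Prod.forall]
  refine forall₂_congr fun p a => imp_congr_right fun _ => ?_
  cases ctx p <;> simp

lemma mem_zip_append_of_mem_zip_take {Gk Lk : List ℕ} {tup : List V}
    (h : (p, a) ∈ Gk.zip (tup.take Gk.length)) : (p, a) ∈ (Gk ++ Lk).zip tup := by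
  have : Gk.zip (tup.take Gk.length) = ((Gk ++ Lk).zip tup).take Gk.length := by
    simp [List.zip, List.take_zipWith]
  exact List.mem_of_mem_take (this ▸ h)

end Binding

lemma length_of_mem_spaceTuples [DecidableEq V] {sp : ℕ → Finset V} {names : List ℕ}
    {tup : List V} (h : tup ∈ spaceTuples sp names) : tup.length = names.length := by
  induction names generalizing tup with
  | nil => simp_all [spaceTuples]
  | cons g gs ih =>
    simp only [spaceTuples, Finset.mem_image, Finset.mem_product] at h
    obtain ⟨⟨a, t⟩, ⟨-, ht⟩, rfl⟩ := h
    simp [ih ht]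

def SubCtxOn (Glist : List ℕ) (ctx ctx' : ℕ → Option V) : Prop :=
  ∀ g ∈ Glist, ∀ a, ctx g = some a → ctx' g = some a

def completeCtx (Glist : List ℕ) (target ctx : ℕ → Option V) : ℕ → Option V :=
  fun p => if p ∈ Glist then target p else ctx p

section Contexts

variable {Glist : List ℕ} {ctx ctx' ctx'' target : ℕ → Option V}

lemma SubCtxOn.trans (h : SubCtxOn Glist ctx ctx') (h' : SubCtxOn Glist ctx' ctx'') :
    SubCtxOn Glist ctx ctx'' :=
  fun g hg a ha => h' g hg a (h g hg a ha)

lemma SubCtxOn.bindCtx (h : SubCtxOn Glist ctx ctx') (names : List ℕ) (vals : List V) :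
    SubCtxOn Glist (bindCtx ctx names vals) (bindCtx ctx' names vals) := by
  intro g hg a ha
  cases hf : (names.zip vals).find? (fun q => q.1 == g) <;>
    simp only [_root_.bindCtx, hf] at ha ⊢
  exacts [h g hg a ha, ha]

lemma completeCtx_of_mem {p : ℕ} (hp : p ∈ Glist) : completeCtx Glist target ctx p = target p :=
  if_pos hp

lemma completeCtx_of_not_mem {p : ℕ} (hp : p ∉ Glist) :
    completeCtx Glist target ctx p = ctx p :=
  if_neg hp

lemma map_completeCtx : Glist.map (completeCtx Glist target ctx) = Glist.map target :=
  List.map_congr_left fun _ hp => completeCtx_of_mem hp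

lemma subCtxOn_completeCtx (h : SubCtxOn Glist ctx target) :
    SubCtxOn Glist ctx (completeCtx Glist target ctx) :=
  fun g hg a ha => (completeCtx_of_mem hg).trans (h g hg a ha)

lemma completeCtx_eq_self (h : SubCtxOn Glist ctx target)
    (hbound : ∀ g ∈ Glist, (ctx g).isSome) : completeCtx Glist target ctx = ctx := by
  funext p
  by_cases hp : p ∈ Glist
  · obtain ⟨a, ha⟩ := Option.isSome_iff_exists.1 (hbound p hp)
    rw [completeCtx_of_mem hp, ha, h p hp a ha]
  · exact completeCtx_of_not_mem hp

end Contexts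

section SumBinding

variable [DecidableEq V] {Glist Gk Lk : List ℕ} {tup : List V} {ctx target : ℕ → Option V}

lemma agreesB_of_subCtxOn {ctx' : ℕ → Option V} {names : List ℕ} {vals : List V}
    (hnames : ∀ g ∈ names, g ∈ Glist) (h : SubCtxOn Glist ctx ctx')
    (hagree : agreesB ctx' names vals = true) : agreesB ctx names vals = true := by
  rw [agreesB_eq_true_iff] at hagree ⊢
  exact fun p a hpa b hb => hagree p a hpa b (h p (hnames p (List.of_mem_zip hpa).1) b hb)

lemma subCtxOn_bindCtx_self (hLk : ∀ l ∈ Lk, l ∉ Glist) (hnd : (Gk ++ Lk).Nodup)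
    (hlen : tup.length = Gk.length + Lk.length)
    (hagree : agreesB ctx Gk (tup.take Gk.length) = true) :
    SubCtxOn Glist ctx (bindCtx ctx (Gk ++ Lk) tup) := by
  intro g hg a ha
  by_cases hgk : g ∈ Gk
  · obtain ⟨b, hb⟩ := exists_mem_zip_of_mem (vals := tup.take Gk.length) (by simp [hlen]) hgk
    rw [bindCtx_of_mem_zip hnd (mem_zip_append_of_mem_zip_take hb),
      (agreesB_eq_true_iff.1 hagree) g b hb a ha]
  · have hgl : g ∉ Lk := fun h => hLk g h hg
    rw [bindCtx_of_not_mem (by simp [hgk, hgl]), ha]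

lemma isSome_bindCtx_of_mem_append {acc : List ℕ} (hLk : ∀ l ∈ Lk, l ∉ Glist)
    (hnd : (Gk ++ Lk).Nodup) (hlen : tup.length = Gk.length + Lk.length)
    (hagree : agreesB ctx Gk (tup.take Gk.length) = true)
    (hacc : ∀ g ∈ Glist, g ∈ acc → (ctx g).isSome) :
    ∀ g ∈ Glist, g ∈ acc ++ Gk → (bindCtx ctx (Gk ++ Lk) tup g).isSome := by
  intro g hg hmem
  rcases List.mem_append.1 hmem with hacc' | hGk'
  · obtain ⟨a, ha⟩ := Option.isSome_iff_exists.1 (hacc g hg hacc')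
    simp [subCtxOn_bindCtx_self hLk hnd hlen hagree g hg a ha]
  · exact isSome_bindCtx_of_mem hnd (by simp [hlen]) (List.mem_append_left Lk hGk')

lemma bindCtx_completeCtx_of_mem (hLk : ∀ l ∈ Lk, l ∉ Glist) (hnd : (Gk ++ Lk).Nodup)
    (hlen : tup.length = Gk.length + Lk.length) (htot : ∀ g ∈ Glist, (target g).isSome)
    (hagree : agreesB (completeCtx Glist target ctx) Gk (tup.take Gk.length) = true)
    {g : ℕ} (hg : g ∈ Glist) :
    bindCtx (completeCtx Glist target ctx) (Gk ++ Lk) tup g = target g := by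
  obtain ⟨a, ha⟩ := Option.isSome_iff_exists.1 (htot g hg)
  rw [ha]
  exact subCtxOn_bindCtx_self hLk hnd hlen hagree g hg a (by rw [completeCtx_of_mem hg, ha])

lemma completeCtx_bindCtx (hLk : ∀ l ∈ Lk, l ∉ Glist) (hnd : (Gk ++ Lk).Nodup)
    (hlen : tup.length = Gk.length + Lk.length) (htot : ∀ g ∈ Glist, (target g).isSome)
    (hagree : agreesB (completeCtx Glist target ctx) Gk (tup.take Gk.length) = true) :
    completeCtx Glist target (bindCtx ctx (Gk ++ Lk) tup) =
      bindCtx (completeCtx Glist target ctx) (Gk ++ Lk) tup := by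
  funext p
  by_cases hp : p ∈ Glist
  · rw [completeCtx_of_mem hp, bindCtx_completeCtx_of_mem hLk hnd hlen htot hagree hp]
  · rw [completeCtx_of_not_mem hp]
    exact bindCtx_apply_congr (completeCtx_of_not_mem hp).symm

lemma subCtxOn_bindCtx_iff (hGk : ∀ g ∈ Gk, g ∈ Glist) (hLk : ∀ l ∈ Lk, l ∉ Glist)
    (hnd : (Gk ++ Lk).Nodup) (hlen : tup.length = Gk.length + Lk.length)
    (htot : ∀ g ∈ Glist, (target g).isSome) (hsub : SubCtxOn Glist ctx target) :
    SubCtxOn Glist (bindCtx ctx (Gk ++ Lk) tup) target ↔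
      agreesB (completeCtx Glist target ctx) Gk (tup.take Gk.length) = true := by
  constructor
  · intro h
    refine agreesB_eq_true_iff.2 fun g b hgb a ha => ?_
    have hg := hGk g (List.of_mem_zip hgb).1
    have hb := h g hg b (bindCtx_of_mem_zip hnd (mem_zip_append_of_mem_zip_take hgb))
    rw [completeCtx_of_mem hg, hb] at ha
    exact Option.some_injective _ ha
  · intro hagree g hg a ha
    rw [← bindCtx_completeCtx_of_mem hLk hnd hlen htot hagree hg]
    exact (subCtxOn_completeCtx hsub).bindCtx (Gk ++ Lk) tup g hg a ha

end SumBinding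

section Algorithms

variable [DecidableEq V] [DecidableEq Var] {Glist : List ℕ} {target : ℕ → Option V}

lemma evalTagged_eq_zero_of_not_subCtxOn (w : Var) {e : GExpr V Var} (hwf : e.wf Glist)
    {ctx : ℕ → Option V} (h : ¬SubCtxOn Glist ctx target) :
    evalTagged Glist e ctx (Glist.map target) w = 0 := by
  induction e generalizing ctx with
  | term c v =>
    refine if_neg fun ⟨htag, _⟩ => h fun g hg a ha => ?_
    rw [List.map_inj_left.1 htag g hg, ha]
  | add l r ihl ihr => simp only [evalTagged, ihl hwf.1 h, ihr hwf.2 h, add_zero]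
  | sub l r ihl ihr => simp only [evalTagged, ihl hwf.1 h, ihr hwf.2 h, sub_zero]
  | sum Gk Lk data body ih =>
    obtain ⟨hGk, hLk, hndG, hndL, hlen, hbody⟩ := hwf
    have hnd : (Gk ++ Lk).Nodup := hndG.append hndL fun g hG hL => hLk g hL (hGk g hG)
    refine Finset.sum_eq_zero fun tup htup => ih hbody fun hbind => h ?_
    obtain ⟨hdata, hagree⟩ := Finset.mem_filter.1 htup
    exact (subCtxOn_bindCtx_self hLk hnd (hlen tup hdata) hagree).trans hbind

lemma evalTagged_eq_evalFull_completeCtx (w : Var) (htot : ∀ g ∈ Glist, (target g).isSome)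
    {e : GExpr V Var} (hwf : e.wf Glist) {acc : List ℕ} (hcov : e.covers Glist acc)
    {ctx : ℕ → Option V} (hsub : SubCtxOn Glist ctx target)
    (hacc : ∀ g ∈ Glist, g ∈ acc → (ctx g).isSome) :
    evalTagged Glist e ctx (Glist.map target) w = evalFull e (completeCtx Glist target ctx) w := by
  induction e generalizing acc ctx with
  | term c v =>
    have hctx := completeCtx_eq_self hsub fun g hg => hacc g hg (hcov g hg)
    rw [← map_completeCtx (ctx := ctx), hctx]
    simp [evalTagged, evalFull]
  | add l r ihl ihr =>
    simp only [evalTagged, evalFull, ihl hwf.1 hcov.1 hsub hacc, ihr hwf.2 hcov.2 hsub hacc]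
  | sub l r ihl ihr =>
    simp only [evalTagged, evalFull, ihl hwf.1 hcov.1 hsub hacc, ihr hwf.2 hcov.2 hsub hacc]
  | sum Gk Lk data body ih =>
    obtain ⟨hGk, hLk, hndG, hndL, hlen, hbody⟩ := hwf
    have hnd : (Gk ++ Lk).Nodup := hndG.append hndL fun g hG hL => hLk g hL (hGk g hG)
    have hfilter : data.filter (fun tup =>
          agreesB (completeCtx Glist target ctx) Gk (tup.take Gk.length) = true) ⊆
        data.filter (fun tup => agreesB ctx Gk (tup.take Gk.length) = true) :=
      Finset.monotone_filter_right _ fun _ _ =>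
        agreesB_of_subCtxOn hGk (subCtxOn_completeCtx hsub)
    simp only [evalTagged, evalFull]
    rw [← Finset.sum_subset hfilter]
    · refine Finset.sum_congr rfl fun tup htup => ?_
      obtain ⟨hdata, hagree⟩ := Finset.mem_filter.1 htup
      rw [← completeCtx_bindCtx hLk hnd (hlen tup hdata) htot hagree]
      obtain ⟨-, hagree'⟩ := Finset.mem_filter.1 (hfilter htup)
      exact ih hbody hcov ((subCtxOn_bindCtx_iff hGk hLk hnd (hlen tup hdata) htot hsub).2 hagree)
        (isSome_bindCtx_of_mem_append hLk hnd (hlen tup hdata) hagree' hacc)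
    · intro tup htup hnot
      obtain ⟨hdata, -⟩ := Finset.mem_filter.1 htup
      refine evalTagged_eq_zero_of_not_subCtxOn w hbody fun h => hnot ?_
      exact Finset.mem_filter.2
        ⟨hdata, (subCtxOn_bindCtx_iff hGk hLk hnd (hlen tup hdata) htot hsub).1 h⟩

end Algorithms

theorem efficient_instantiation_correct_general [DecidableEq V] [DecidableEq Var]
    (sp : ℕ → Finset V) (Glist : List ℕ) (hnd : Glist.Nodup)
    (e : GExpr V Var) (hwf : e.wf Glist)
    (hcov : e.covers Glist []) :
    ∀ Gstar ∈ spaceTuples sp Glist, ∀ w : Var,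
      evalTagged Glist e (fun _ => none) (Gstar.map some) w =
      evalFull e (fullCtx Glist Gstar) w := by
  intro Gstar hGstar w
  have hlen := length_of_mem_spaceTuples hGstar
  have htot (g : ℕ) (hg : g ∈ Glist) : (fullCtx Glist Gstar g).isSome :=
    isSome_bindCtx_of_mem hnd hlen.ge hg
  have hcomplete :
      completeCtx Glist (fullCtx Glist Gstar) (fun _ => none) = fullCtx Glist Gstar := by
    funext p
    by_cases hp : p ∈ Glist
    · exact completeCtx_of_mem hp
    · rw [completeCtx_of_not_mem hp, fullCtx, bindCtx_of_not_mem hp]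
  rw [← map_bindCtx (ctx := fun _ => none) hnd hlen, ← hcomplete]
  exact evalTagged_eq_evalFull_completeCtx w htot hwf hcov (fun _ _ _ h => by cases h)
    fun _ _ h => by cases h

/-- **Proposition 1 (correctness of the efficient instantiation algorithm).**  Let `e` be a
symbolic multidimensional expression with global placeholder tuple `Glist` satisfying the
assumptions of Lemmas 1 and 2: every path from a leaf node to the root passes through at
least one sum operator (`e.allUnderSum`), and for every leaf node the union of the global
index placeholder tuples `Gk` over all sum operators on its path to the root equals `Glist`
(`e.covers Glist []`, together with the well-formedness conditions `e.wf Glist`).  Then,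
given the same set data, the constraint matrices output by the exhaustive instantiation
algorithm (Algorithm 1) and by the context-passing instantiation algorithm (Algorithm 2)
are identical: for every global index tuple `G* ∈ space(G)` and every variable `w`, the
coefficient of `w` in the row tagged `G*` produced by Algorithm 2 (run from the empty
context, aggregating tagged terms with equal tags) equals the coefficient of `w` in the
expression `expr_{G*}` produced by Algorithm 1. -/
theorem efficient_instantiation_correct [DecidableEq V] [DecidableEq Var]
    (sp : ℕ → Finset V) (Glist : List ℕ) (hnd : Glist.Nodup)
    (e : GExpr V Var) (hwf : e.wf Glist) (hsum : e.allUnderSum)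
    (hcov : e.covers Glist []) :
    ∀ Gstar ∈ spaceTuples sp Glist, ∀ w : Var,
      evalTagged Glist e (fun _ => none) (Gstar.map some) w =
      evalFull e (fullCtx Glist Gstar) w :=
  efficient_instantiation_correct_general sp Glist hnd e hwf hcov
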